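/- arXiv:1706.01266 — 2 statements merged into one kernel-verified Lean document; each statement's English description precedes it below -/
import Mathlib

section
/- Let p ≥ 3 be prime, a, b ∈ E_p = {x ∈ ℚ_p : |x−1|_p < 1}, and define g(u) = a(b²u² + 1)/(b² + u²). Then g maps E_p into E_p; more precisely |g(u) − 1|_p ≤ 1/p for every u ∈ E_p. -/
/-!
Elements at distance `< 1` from `1` are units, and in `ℚ_[p]` the open unit ball is the ball of
radius `p⁻¹`. The identity
`a (b²u² + 1) - (b² + u²) = (a - 1)(b²u² + 1) + (b² - 1)(u² - 1)`
bounds the numerator of `g(u) - 1` by `p⁻¹`, while for odd `p` the denominator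
`b² + u² = 2 + (b² - 1) + (u² - 1)` is a unit.
-/

namespace IsUltrametricDist

lemma norm_add_eq_left_of_norm_lt {S : Type*} [SeminormedAddGroup S] [IsUltrametricDist S]
    {x y : S} (h : ‖y‖ < ‖x‖) : ‖x + y‖ = ‖x‖ := by
  rw [norm_add_eq_max_of_norm_ne_norm h.ne', max_eq_left h.le]

variable {K : Type*} [NormedField K] [IsUltrametricDist K]

lemma norm_eq_one_of_norm_sub_one_lt_one {x : K} (h : ‖x - 1‖ < 1) : ‖x‖ = 1 := by
  simpa using norm_add_eq_left_of_norm_lt (x := (1 : K)) (h.trans_eq norm_one.symm)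

lemma norm_sq_sub_one_le_norm_sub_one {x : K} (hx : ‖x‖ = 1) : ‖x ^ 2 - 1‖ ≤ ‖x - 1‖ := by
  have h_add : ‖x + 1‖ ≤ 1 := by simpa [hx] using norm_add_one_le_max_norm_one x
  calc ‖x ^ 2 - 1‖ = ‖x - 1‖ * ‖x + 1‖ := by rw [← norm_mul]; ring_nf
    _ ≤ ‖x - 1‖ := mul_le_of_le_one_right (norm_nonneg _) h_add

variable {r : ℝ} {a b u : K}

lemma norm_sq_add_sq_eq_one (hr : r < 1) (h2 : ‖(2 : K)‖ = 1)
    (hb : ‖b - 1‖ ≤ r) (hu : ‖u - 1‖ ≤ r) : ‖b ^ 2 + u ^ 2‖ = 1 := by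
  have hb1 := norm_eq_one_of_norm_sub_one_lt_one (hb.trans_lt hr)
  have hu1 := norm_eq_one_of_norm_sub_one_lt_one (hu.trans_lt hr)
  have h_small : ‖(b ^ 2 - 1) + (u ^ 2 - 1)‖ < ‖(2 : K)‖ := by
    rw [h2]
    refine (norm_add_le_max _ _).trans_lt (max_lt ?_ ?_)
    · exact ((norm_sq_sub_one_le_norm_sub_one hb1).trans hb).trans_lt hr
    · exact ((norm_sq_sub_one_le_norm_sub_one hu1).trans hu).trans_lt hr
  rw [← h2, ← norm_add_eq_left_of_norm_lt h_small]
  ring_nf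

lemma norm_mul_sq_mul_sq_add_one_sub_le (hr : r < 1)
    (ha : ‖a - 1‖ ≤ r) (hb : ‖b - 1‖ ≤ r) (hu : ‖u - 1‖ ≤ r) :
    ‖a * (b ^ 2 * u ^ 2 + 1) - (b ^ 2 + u ^ 2)‖ ≤ r := by
  have hb1 := norm_eq_one_of_norm_sub_one_lt_one (hb.trans_lt hr)
  have hu1 := norm_eq_one_of_norm_sub_one_lt_one (hu.trans_lt hr)
  have h_first : ‖(a - 1) * (b ^ 2 * u ^ 2 + 1)‖ ≤ r := by
    have : ‖b ^ 2 * u ^ 2 + 1‖ ≤ 1 := by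
      have h_prod : ‖b ^ 2 * u ^ 2‖ = 1 := by simp [norm_mul, norm_pow, hb1, hu1]
      exact (norm_add_one_le_max_norm_one _).trans_eq (by rw [h_prod, max_self])
    rw [norm_mul]
    exact (mul_le_of_le_one_right (norm_nonneg _) this).trans ha
  have h_second : ‖(b ^ 2 - 1) * (u ^ 2 - 1)‖ ≤ r := by
    rw [norm_mul]
    refine (mul_le_of_le_one_right (norm_nonneg _) ?_).trans
      ((norm_sq_sub_one_le_norm_sub_one hb1).trans hb)
    exact (norm_sq_sub_one_le_norm_sub_one hu1).trans (hu.trans hr.le)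
  calc ‖a * (b ^ 2 * u ^ 2 + 1) - (b ^ 2 + u ^ 2)‖
        = ‖(a - 1) * (b ^ 2 * u ^ 2 + 1) + (b ^ 2 - 1) * (u ^ 2 - 1)‖ := by ring_nf
    _ ≤ r := (norm_add_le_max _ _).trans (max_le h_first h_second)

lemma norm_mul_div_sq_add_sq_sub_one_le (hr : r < 1) (h2 : ‖(2 : K)‖ = 1)
    (ha : ‖a - 1‖ ≤ r) (hb : ‖b - 1‖ ≤ r) (hu : ‖u - 1‖ ≤ r) :
    ‖a * (b ^ 2 * u ^ 2 + 1) / (b ^ 2 + u ^ 2) - 1‖ ≤ r := by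
  have hden := norm_sq_add_sq_eq_one hr h2 hb hu
  have hden0 : b ^ 2 + u ^ 2 ≠ 0 := norm_ne_zero_iff.mp (hden.trans_ne one_ne_zero)
  rw [div_sub_one hden0, norm_div, hden, div_one]
  exact norm_mul_sq_mul_sq_add_one_sub_le hr ha hb hu

end IsUltrametricDist

namespace Padic

variable {p : ℕ} [Fact p.Prime]

lemma norm_le_inv_of_norm_lt_one {x : ℚ_[p]} (h : ‖x‖ < 1) : ‖x‖ ≤ (p : ℝ)⁻¹ := by
  simpa using (norm_lt_pow_iff_norm_le_pow_sub_one x 0).mp (by simpa using h)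

lemma norm_two_eq_one (hp : p ≠ 2) : ‖(2 : ℚ_[p])‖ = 1 := by
  exact_mod_cast norm_natCast_eq_one_iff.mpr ((Nat.coprime_primes Fact.out Nat.prime_two).mpr hp)

end Padic

open IsUltrametricDist Padic in
theorem stmt4 (p : ℕ) [Fact p.Prime] (hp : 3 ≤ p) (a b : ℚ_[p])
    (ha : ‖a - 1‖ < 1) (hb : ‖b - 1‖ < 1) (u : ℚ_[p]) (hu : ‖u - 1‖ < 1) :
    ‖a * (b ^ 2 * u ^ 2 + 1) / (b ^ 2 + u ^ 2) - 1‖ ≤ (p : ℝ)⁻¹ := by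
  have hr : (p : ℝ)⁻¹ < 1 := inv_lt_one_of_one_lt₀ (mod_cast (Fact.out : p.Prime).one_lt)
  exact norm_mul_div_sq_add_sq_sub_one_le hr (norm_two_eq_one (by omega))
    (norm_le_inv_of_norm_lt_one ha) (norm_le_inv_of_norm_lt_one hb)
    (norm_le_inv_of_norm_lt_one hu)
end

section
/- Let p ≥ 3 be prime with p ≡ 3 (mod 4), and a, b ∈ E_p. Then the cubic equation x³ − ab²x² + b²x − a = 0 has exactly one solution in ℚ_p, namely the unique fixed point x₀ ∈ E_p of g(u) = a(b²u² + 1)/(b² + u²). -/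
/-!
Every root lies in `ℤ_[p]` (the cubic is monic and `ℤ_[p]` is integrally closed), and since
`a ≡ b ≡ 1 (mod p)` it reduces to a root of `t³ - t² + t - 1 = (t - 1)(t² + 1)` in `ZMod p`.
As `-1` is not a square mod `p`, every root is `≡ 1`. Two such roots `z, w` satisfy
`(z - w)(z² + zw + w² - ab²(z + w) + b²) = 0`, whose second factor is `≡ 2`, so they coincide.
A root exists by Hensel's lemma at `1`: the cubic is `≡ 0` there and its derivative `≡ 2`.
Finally `b² + x² ≡ 2` does not vanish, so being a root is the fixed-point equation for `g`.
-/

open Polynomial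

section Cubic

variable {R : Type*} [CommRing R]

noncomputable def fixedPointCubic (a b : R) : R[X] :=
  X ^ 3 - C (a * b ^ 2) * X ^ 2 + C (b ^ 2) * X - C a

theorem monic_fixedPointCubic [Nontrivial R] (a b : R) : (fixedPointCubic a b).Monic := by
  unfold fixedPointCubic
  monicity!

@[simp]
theorem aeval_fixedPointCubic {A : Type*} [CommRing A] [Algebra R A] (a b : R) (x : A) :
    aeval x (fixedPointCubic a b) =
      x ^ 3 - algebraMap R A a * algebraMap R A b ^ 2 * x ^ 2 + algebraMap R A b ^ 2 * x
        - algebraMap R A a := by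
  simp [fixedPointCubic]

theorem aeval_one_derivative_fixedPointCubic (a b : R) :
    aeval (1 : R) (derivative (fixedPointCubic a b)) = 3 - a * b ^ 2 * 2 + b ^ 2 := by
  simp [fixedPointCubic, derivative_pow]

end Cubic

theorem eq_one_of_cubic_eq_zero {K : Type*} [Field K] (hK : ¬IsSquare (-1 : K)) {t : K}
    (ht : t ^ 3 - t ^ 2 + t - 1 = 0) : t = 1 := by
  have hfac : (t - 1) * (t ^ 2 + 1) = 0 := by linear_combination ht
  rcases mul_eq_zero.1 hfac with h | h
  · exact sub_eq_zero.1 h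
  · exact absurd ⟨t, by linear_combination -h⟩ hK

theorem ZMod.two_ne_zero_of_ne_two {p : ℕ} [Fact p.Prime] (hp : p ≠ 2) : (2 : ZMod p) ≠ 0 :=
  Ring.two_ne_zero (by rwa [ZMod.ringChar_zmod_n])

namespace PadicInt

variable {p : ℕ} [Fact p.Prime]

theorem toZMod_eq_zero_iff {z : ℤ_[p]} : toZMod z = 0 ↔ ‖z‖ < 1 := by
  rw [← RingHom.mem_ker, ker_toZMod, IsLocalRing.mem_maximalIdeal, mem_nonunits]

theorem toZMod_eq_one_iff {z : ℤ_[p]} : toZMod z = 1 ↔ ‖(z : ℚ_[p]) - 1‖ < 1 := by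
  rw [← sub_eq_zero, ← map_one toZMod, ← map_sub, toZMod_eq_zero_iff, norm_def]
  push_cast
  rfl

theorem norm_eq_one_of_toZMod_ne_zero {z : ℤ_[p]} (hz : toZMod z ≠ 0) : ‖z‖ = 1 :=
  (norm_le_one z).antisymm (not_lt.1 (mt toZMod_eq_zero_iff.2 hz))

theorem exists_coe_eq_of_norm_sub_one_lt_one {x : ℚ_[p]} (hx : ‖x - 1‖ < 1) :
    ∃ z : ℤ_[p], (z : ℚ_[p]) = x ∧ toZMod z = 1 := by
  have hx1 : ‖x‖ = 1 := by
    simpa using Padic.norm_eq_of_norm_sub_lt_right (z1 := x) (z2 := 1) (by simpa using hx)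
  exact ⟨⟨x, hx1.le⟩, rfl, toZMod_eq_one_iff.2 hx⟩

theorem exists_coe_eq_of_aeval_eq_zero {F : ℤ_[p][X]} (hF : F.Monic) {x : ℚ_[p]}
    (hx : aeval x F = 0) : ∃ z : ℤ_[p], (z : ℚ_[p]) = x :=
  IsIntegrallyClosed.isIntegral_iff.1 ⟨F, hF, hx⟩

end PadicInt

section Roots

open PadicInt

variable {p : ℕ} [Fact p.Prime] {a b : ℤ_[p]} (ha : toZMod a = 1) (hb : toZMod b = 1)
include ha hb

theorem toZMod_eq_one_of_cubic_eq_zero (hp4 : p % 4 = 3) {z : ℤ_[p]}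
    (hz : z ^ 3 - a * b ^ 2 * z ^ 2 + b ^ 2 * z - a = 0) : toZMod z = 1 :=
  eq_one_of_cubic_eq_zero (fun h => ZMod.exists_sq_eq_neg_one_iff.1 h hp4)
    (by simpa [ha, hb] using congrArg toZMod hz)

theorem eq_of_cubic_eq_zero (hp : p ≠ 2) (hp4 : p % 4 = 3) {z w : ℤ_[p]}
    (hz : z ^ 3 - a * b ^ 2 * z ^ 2 + b ^ 2 * z - a = 0)
    (hw : w ^ 3 - a * b ^ 2 * w ^ 2 + b ^ 2 * w - a = 0) : z = w := by
  have hz1 := toZMod_eq_one_of_cubic_eq_zero ha hb hp4 hz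
  have hw1 := toZMod_eq_one_of_cubic_eq_zero ha hb hp4 hw
  have hfac : (z - w) * (z ^ 2 + z * w + w ^ 2 - a * b ^ 2 * (z + w) + b ^ 2) = 0 := by
    linear_combination hz - hw
  have hcofactor : toZMod (z ^ 2 + z * w + w ^ 2 - a * b ^ 2 * (z + w) + b ^ 2) = 2 := by
    simp only [map_add, map_sub, map_mul, map_pow, ha, hb, hz1, hw1]
    norm_num
  exact sub_eq_zero.1 ((mul_eq_zero.1 hfac).resolve_right
    (ne_zero_of_map (f := toZMod) (hcofactor ▸ ZMod.two_ne_zero_of_ne_two hp)))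

theorem exists_cubic_eq_zero (hp : p ≠ 2) :
    ∃ z : ℤ_[p], z ^ 3 - a * b ^ 2 * z ^ 2 + b ^ 2 * z - a = 0 := by
  have hval : toZMod (aeval (1 : ℤ_[p]) (fixedPointCubic a b)) = 0 := by simp [ha, hb]
  have hder : toZMod (aeval (1 : ℤ_[p]) (derivative (fixedPointCubic a b))) = 2 := by
    rw [aeval_one_derivative_fixedPointCubic]
    simp only [map_add, map_sub, map_mul, map_pow, map_ofNat, ha, hb]
    norm_num
  have hnorm : ‖aeval (1 : ℤ_[p]) (fixedPointCubic a b)‖ <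
      ‖aeval (1 : ℤ_[p]) (derivative (fixedPointCubic a b))‖ ^ 2 := by
    have hunit : ‖aeval (1 : ℤ_[p]) (derivative (fixedPointCubic a b))‖ = 1 :=
      norm_eq_one_of_toZMod_ne_zero (hder ▸ ZMod.two_ne_zero_of_ne_two hp)
    rw [hunit, one_pow]
    exact toZMod_eq_zero_iff.1 hval
  obtain ⟨z, hz, -⟩ := hensels_lemma hnorm
  exact ⟨z, by simpa using hz⟩

end Roots

theorem stmt7_general (p : ℕ) [Fact p.Prime] (hp4 : p % 4 = 3)
    (a b : ℚ_[p]) (ha : ‖a - 1‖ < 1) (hb : ‖b - 1‖ < 1) :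
    (∃! x : ℚ_[p], x ^ 3 - a * b ^ 2 * x ^ 2 + b ^ 2 * x - a = 0) ∧
    ∀ x : ℚ_[p], x ^ 3 - a * b ^ 2 * x ^ 2 + b ^ 2 * x - a = 0 →
      ‖x - 1‖ < 1 ∧ a * (b ^ 2 * x ^ 2 + 1) / (b ^ 2 + x ^ 2) = x := by
  have hp2 : p ≠ 2 := by rintro rfl; norm_num at hp4
  obtain ⟨a, rfl, ha1⟩ := PadicInt.exists_coe_eq_of_norm_sub_one_lt_one ha
  obtain ⟨b, rfl, hb1⟩ := PadicInt.exists_coe_eq_of_norm_sub_one_lt_one hb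
  have lift_root (x : ℚ_[p]) (hx : x ^ 3 - a * b ^ 2 * x ^ 2 + b ^ 2 * x - a = 0) :
      ∃ z : ℤ_[p], (z : ℚ_[p]) = x ∧ z ^ 3 - a * b ^ 2 * z ^ 2 + b ^ 2 * z - a = 0 := by
    obtain ⟨z, rfl⟩ :=
      PadicInt.exists_coe_eq_of_aeval_eq_zero (monic_fixedPointCubic a b) (by simpa using hx)
    exact ⟨z, rfl, PadicInt.coe_eq_zero.1 (by push_cast; exact hx)⟩
  obtain ⟨z, hz⟩ := exists_cubic_eq_zero ha1 hb1 hp2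
  refine ⟨⟨z, by simpa using congrArg ((↑) : ℤ_[p] → ℚ_[p]) hz, fun x hx => ?_⟩, fun x hx => ?_⟩
  · obtain ⟨y, rfl, hy⟩ := lift_root x hx
    rw [eq_of_cubic_eq_zero ha1 hb1 hp2 hp4 hy hz]
  · obtain ⟨y, rfl, hy⟩ := lift_root x hx
    have hy1 := toZMod_eq_one_of_cubic_eq_zero ha1 hb1 hp4 hy
    have hden : (b : ℚ_[p]) ^ 2 + y ^ 2 ≠ 0 := by
      have h2 : PadicInt.toZMod (b ^ 2 + y ^ 2) = 2 := by
        simp only [map_add, map_pow, hb1, hy1]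
        norm_num
      have hne : b ^ 2 + y ^ 2 ≠ 0 :=
        ne_zero_of_map (f := PadicInt.toZMod) (h2 ▸ ZMod.two_ne_zero_of_ne_two hp2)
      simpa using PadicInt.coe_ne_zero.2 hne
    refine ⟨PadicInt.toZMod_eq_one_iff.1 hy1, ?_⟩
    rw [div_eq_iff hden]
    linear_combination -hx

theorem stmt7 (p : ℕ) [Fact p.Prime] (hp : 3 ≤ p) (hp4 : p % 4 = 3)
    (a b : ℚ_[p]) (ha : ‖a - 1‖ < 1) (hb : ‖b - 1‖ < 1) :
    (∃! x : ℚ_[p], x ^ 3 - a * b ^ 2 * x ^ 2 + b ^ 2 * x - a = 0) ∧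
    ∀ x : ℚ_[p], x ^ 3 - a * b ^ 2 * x ^ 2 + b ^ 2 * x - a = 0 →
      ‖x - 1‖ < 1 ∧ a * (b ^ 2 * x ^ 2 + 1) / (b ^ 2 + x ^ 2) = x :=
  stmt7_general p hp4 a b ha hb
end
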